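/- Let u: ℝ² × ℝ → ℝ be smooth and suppose u solves the affine-invariant geometric heat equation ∂u/∂t = (u_x² u_yy − 2 u_x u_y u_xy + u_y² u_xx)^{1/3} (real cube root), where spatial derivatives are taken in the first two arguments. Let A be a 2×2 real matrix with det A = 1 and b ∈ ℝ². Then v(z, t) := u(A⁻¹(z − b), t) also solves the same equation; consequently the affine-invariant scale-space representations of two images related by an equi-affine transformation remain related by that same transformation for all t > 0. -/

import Mathlib

/-- Spatial partial derivative in `x` of `f : ℝ² × ℝ → ℝ` (first two arguments are
space, the last is the scale/time parameter). -/
noncomputable def sdx (f : (ℝ × ℝ) × ℝ → ℝ) (p : (ℝ × ℝ) × ℝ) : ℝ :=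
  fderiv ℝ f p ((1, 0), 0)

/-- Spatial partial derivative in `y`. -/
noncomputable def sdy (f : (ℝ × ℝ) × ℝ → ℝ) (p : (ℝ × ℝ) × ℝ) : ℝ :=
  fderiv ℝ f p ((0, 1), 0)

/-- Partial derivative in the scale/time parameter `t`. -/
noncomputable def sdt (f : (ℝ × ℝ) × ℝ → ℝ) (p : (ℝ × ℝ) × ℝ) : ℝ :=
  fderiv ℝ f p ((0, 0), 1)

noncomputable def sdxx (f : (ℝ × ℝ) × ℝ → ℝ) : (ℝ × ℝ) × ℝ → ℝ := sdx (sdx f)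
noncomputable def sdxy (f : (ℝ × ℝ) × ℝ → ℝ) : (ℝ × ℝ) × ℝ → ℝ := sdy (sdx f)
noncomputable def sdyy (f : (ℝ × ℝ) × ℝ → ℝ) : (ℝ × ℝ) × ℝ → ℝ := sdy (sdy f)

/-- The real cube root function on `ℝ`. -/
noncomputable def cbrt (s : ℝ) : ℝ := Real.sign s * |s| ^ ((1 : ℝ) / 3)

/-- The right-hand side `(u_x² u_yy − 2 u_x u_y u_xy + u_y² u_xx)^{1/3}` of the
affine-invariant geometric heat equation. -/
noncomputable def affineHeatRHS (f : (ℝ × ℝ) × ℝ → ℝ) (p : (ℝ × ℝ) × ℝ) : ℝ :=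
  cbrt ((sdx f p) ^ 2 * sdyy f p - 2 * sdx f p * sdy f p * sdxy f p +
    (sdy f p) ^ 2 * sdxx f p)

/-! ### Auxiliary machinery -/

/-- The equi-affine change of variables on space-time. -/
noncomputable def Tmap (α β γ δ b₁ b₂ : ℝ) (q : (ℝ × ℝ) × ℝ) : (ℝ × ℝ) × ℝ :=
  ((δ * (q.1.1 - b₁) - β * (q.1.2 - b₂), -γ * (q.1.1 - b₁) + α * (q.1.2 - b₂)), q.2)

noncomputable def e1 : ((ℝ × ℝ) × ℝ) →L[ℝ] ℝ :=
  (ContinuousLinearMap.fst ℝ ℝ ℝ).comp (ContinuousLinearMap.fst ℝ (ℝ × ℝ) ℝ)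

noncomputable def e2 : ((ℝ × ℝ) × ℝ) →L[ℝ] ℝ :=
  (ContinuousLinearMap.snd ℝ ℝ ℝ).comp (ContinuousLinearMap.fst ℝ (ℝ × ℝ) ℝ)

/-- Linear part of `Tmap` as a continuous linear map. -/
noncomputable def Lmap (α β γ δ : ℝ) : ((ℝ × ℝ) × ℝ) →L[ℝ] ((ℝ × ℝ) × ℝ) :=
  ((δ • e1 - β • e2).prod ((-γ) • e1 + α • e2)).prod (ContinuousLinearMap.snd ℝ (ℝ × ℝ) ℝ)

lemma Lmap_apply (α β γ δ : ℝ) (w : (ℝ × ℝ) × ℝ) :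
    Lmap α β γ δ w = ((δ * w.1.1 - β * w.1.2, -γ * w.1.1 + α * w.1.2), w.2) := by
  simp [Lmap, e1, e2, smul_eq_mul]

lemma Tmap_hasFDerivAt (α β γ δ b₁ b₂ : ℝ) (p : (ℝ × ℝ) × ℝ) :
    HasFDerivAt (Tmap α β γ δ b₁ b₂) (Lmap α β γ δ) p := by
  have h : Tmap α β γ δ b₁ b₂ =
      fun q => Lmap α β γ δ q + ((-(δ * b₁) + β * b₂, γ * b₁ - α * b₂), 0) := by
    funext q
    simp [Tmap, Lmap_apply, Prod.ext_iff]
    constructor <;> ring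
  rw [h]
  exact (Lmap α β γ δ).hasFDerivAt.add_const _

lemma Tmap_diff (α β γ δ b₁ b₂ : ℝ) : Differentiable ℝ (Tmap α β γ δ b₁ b₂) :=
  fun p => (Tmap_hasFDerivAt α β γ δ b₁ b₂ p).differentiableAt

lemma chainT (α β γ δ b₁ b₂ : ℝ) (f : (ℝ × ℝ) × ℝ → ℝ) (p : (ℝ × ℝ) × ℝ)
    (hf : DifferentiableAt ℝ f (Tmap α β γ δ b₁ b₂ p)) :
    fderiv ℝ (fun q => f (Tmap α β γ δ b₁ b₂ q)) p
      = (fderiv ℝ f (Tmap α β γ δ b₁ b₂ p)).comp (Lmap α β γ δ) :=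
  (hf.hasFDerivAt.comp p (Tmap_hasFDerivAt α β γ δ b₁ b₂ p)).fderiv

lemma clm_expand (φ : ((ℝ × ℝ) × ℝ) →L[ℝ] ℝ) (x y t : ℝ) :
    φ ((x, y), t) = x * φ ((1, 0), 0) + y * φ ((0, 1), 0) + t * φ ((0, 0), 1) := by
  have h : ((x, y), t) = x • ((((1:ℝ), (0:ℝ)), (0:ℝ)) : (ℝ × ℝ) × ℝ)
      + y • ((((0:ℝ), (1:ℝ)), (0:ℝ)) : (ℝ × ℝ) × ℝ)
      + t • ((((0:ℝ), (0:ℝ)), (1:ℝ)) : (ℝ × ℝ) × ℝ) := by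
    simp [Prod.ext_iff]
  rw [h, map_add, map_add, map_smul, map_smul, map_smul, smul_eq_mul, smul_eq_mul, smul_eq_mul]

lemma sdx_compT (α β γ δ b₁ b₂ : ℝ) (f : (ℝ × ℝ) × ℝ → ℝ) (p : (ℝ × ℝ) × ℝ)
    (hf : DifferentiableAt ℝ f (Tmap α β γ δ b₁ b₂ p)) :
    sdx (fun q => f (Tmap α β γ δ b₁ b₂ q)) p
      = δ * sdx f (Tmap α β γ δ b₁ b₂ p) - γ * sdy f (Tmap α β γ δ b₁ b₂ p) := by
  unfold sdx sdy
  rw [chainT α β γ δ b₁ b₂ f p hf, ContinuousLinearMap.comp_apply, Lmap_apply]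
  rw [show ((δ * (1:ℝ) - β * 0, -γ * (1:ℝ) + α * 0), (0:ℝ)) = ((δ, -γ), (0:ℝ)) by norm_num]
  rw [clm_expand]
  ring

lemma sdy_compT (α β γ δ b₁ b₂ : ℝ) (f : (ℝ × ℝ) × ℝ → ℝ) (p : (ℝ × ℝ) × ℝ)
    (hf : DifferentiableAt ℝ f (Tmap α β γ δ b₁ b₂ p)) :
    sdy (fun q => f (Tmap α β γ δ b₁ b₂ q)) p
      = -β * sdx f (Tmap α β γ δ b₁ b₂ p) + α * sdy f (Tmap α β γ δ b₁ b₂ p) := by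
  unfold sdx sdy
  rw [chainT α β γ δ b₁ b₂ f p hf, ContinuousLinearMap.comp_apply, Lmap_apply]
  rw [show ((δ * (0:ℝ) - β * 1, -γ * (0:ℝ) + α * 1), (0:ℝ)) = ((-β, α), (0:ℝ)) by norm_num]
  rw [clm_expand]
  ring

lemma sdt_compT (α β γ δ b₁ b₂ : ℝ) (f : (ℝ × ℝ) × ℝ → ℝ) (p : (ℝ × ℝ) × ℝ)
    (hf : DifferentiableAt ℝ f (Tmap α β γ δ b₁ b₂ p)) :
    sdt (fun q => f (Tmap α β γ δ b₁ b₂ q)) p = sdt f (Tmap α β γ δ b₁ b₂ p) := by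
  unfold sdt
  rw [chainT α β γ δ b₁ b₂ f p hf, ContinuousLinearMap.comp_apply, Lmap_apply]
  norm_num


lemma contDiff_sd (f : (ℝ × ℝ) × ℝ → ℝ) (hf : ContDiff ℝ (⊤ : ℕ∞) f) (w : (ℝ × ℝ) × ℝ) :
    ContDiff ℝ (⊤ : ℕ∞) (fun q => fderiv ℝ f q w) :=
  (hf.fderiv_right (by simp)).clm_apply contDiff_const

lemma contDiff_sdx (f : (ℝ × ℝ) × ℝ → ℝ) (hf : ContDiff ℝ (⊤ : ℕ∞) f) : ContDiff ℝ (⊤ : ℕ∞) (sdx f) :=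
  contDiff_sd f hf ((1, 0), 0)

lemma contDiff_sdy (f : (ℝ × ℝ) × ℝ → ℝ) (hf : ContDiff ℝ (⊤ : ℕ∞) f) : ContDiff ℝ (⊤ : ℕ∞) (sdy f) :=
  contDiff_sd f hf ((0, 1), 0)

lemma sd_symm (f : (ℝ × ℝ) × ℝ → ℝ) (hf : ContDiff ℝ (⊤ : ℕ∞) f) (p : (ℝ × ℝ) × ℝ) :
    sdx (sdy f) p = sdy (sdx f) p := by
  have h2 : IsSymmSndFDerivAt ℝ f p :=
    hf.contDiffAt.isSymmSndFDerivAt (by rw [minSmoothness_of_isRCLikeNormedField]; exact WithTop.coe_le_coe.mpr le_top)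
  have hdf : DifferentiableAt ℝ (fderiv ℝ f) p :=
    ((hf.fderiv_right (m := (⊤ : ℕ∞)) (by simp)).differentiable (by simp)) p
  have e : ∀ w : (ℝ × ℝ) × ℝ, fderiv ℝ (fun q => fderiv ℝ f q w) p
      = (fderiv ℝ (fderiv ℝ f) p).flip w := by
    intro w
    rw [fderiv_clm_apply hdf (differentiableAt_const w)]
    simp
  unfold sdx sdy
  rw [e, e]
  simpa using h2 ((1, 0), 0) ((0, 1), 0)

lemma fderiv_lin_comb (c d : ℝ) (A B : (ℝ × ℝ) × ℝ → ℝ) (p w : (ℝ × ℝ) × ℝ)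
    (hA : DifferentiableAt ℝ A p) (hB : DifferentiableAt ℝ B p) :
    fderiv ℝ (fun q => c * A q + d * B q) p w
      = c * fderiv ℝ A p w + d * fderiv ℝ B p w := by
  rw [fderiv_fun_add ((hA.const_mul c)) ((hB.const_mul d)), fderiv_const_mul hA c,
    fderiv_const_mul hB d]
  simp

lemma sdx_lin (c d : ℝ) (A B : (ℝ × ℝ) × ℝ → ℝ) (p : (ℝ × ℝ) × ℝ)
    (hA : DifferentiableAt ℝ A p) (hB : DifferentiableAt ℝ B p) :
    sdx (fun q => c * A q + d * B q) p = c * sdx A p + d * sdx B p :=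
  fderiv_lin_comb c d A B p ((1, 0), 0) hA hB

lemma sdy_lin (c d : ℝ) (A B : (ℝ × ℝ) × ℝ → ℝ) (p : (ℝ × ℝ) × ℝ)
    (hA : DifferentiableAt ℝ A p) (hB : DifferentiableAt ℝ B p) :
    sdy (fun q => c * A q + d * B q) p = c * sdy A p + d * sdy B p :=
  fderiv_lin_comb c d A B p ((0, 1), 0) hA hB

/-- if the smooth family `u(x, y, t)` solves the affine-invariant
geometric heat equation `u_t = (u_x² u_yy − 2 u_x u_y u_xy + u_y² u_xx)^{1/3}`, and
`A = [[α,β],[γ,δ]]` has determinant `1` with translation `b = (b₁, b₂)`, then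
`v(z, t) := u(A⁻¹(z − b), t)` solves the same equation; hence the affine-invariant
scale-spaces of equi-affine related images stay related by the same transformation. -/
theorem affine_heat_equation_equiaffine_invariant
    (α β γ δ b₁ b₂ : ℝ) (hdet : α * δ - β * γ = 1)
    (u : (ℝ × ℝ) × ℝ → ℝ) (hu : ContDiff ℝ (⊤ : ℕ∞) u)
    (hpde : ∀ p : (ℝ × ℝ) × ℝ, sdt u p = affineHeatRHS u p)
    (v : (ℝ × ℝ) × ℝ → ℝ)
    (hv : ∀ p : (ℝ × ℝ) × ℝ,
      v p = u ((δ * (p.1.1 - b₁) - β * (p.1.2 - b₂),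
                -γ * (p.1.1 - b₁) + α * (p.1.2 - b₂)), p.2)) :
    ∀ p : (ℝ × ℝ) × ℝ, sdt v p = affineHeatRHS v p := by
  intro p
  have hveq : v = fun q => u (Tmap α β γ δ b₁ b₂ q) := funext fun q => hv q
  have hud : Differentiable ℝ u := hu.differentiable (by simp)
  have hux : ContDiff ℝ (⊤ : ℕ∞) (sdx u) := contDiff_sdx u hu
  have huy : ContDiff ℝ (⊤ : ℕ∞) (sdy u) := contDiff_sdy u hu
  have huxd : Differentiable ℝ (sdx u) := hux.differentiable (by simp)
  have huyd : Differentiable ℝ (sdy u) := huy.differentiable (by simp)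
  -- first derivatives of v
  have dvx : sdx v p = δ * sdx u (Tmap α β γ δ b₁ b₂ p) - γ * sdy u (Tmap α β γ δ b₁ b₂ p) := by
    rw [hveq]; exact sdx_compT α β γ δ b₁ b₂ u p (hud _)
  have dvy : sdy v p = -β * sdx u (Tmap α β γ δ b₁ b₂ p) + α * sdy u (Tmap α β γ δ b₁ b₂ p) := by
    rw [hveq]; exact sdy_compT α β γ δ b₁ b₂ u p (hud _)
  have dvt : sdt v p = sdt u (Tmap α β γ δ b₁ b₂ p) := by
    rw [hveq]; exact sdt_compT α β γ δ b₁ b₂ u p (hud _)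
  -- the first derivatives as functions
  have hSx : sdx v = fun q => δ * sdx u (Tmap α β γ δ b₁ b₂ q)
      + (-γ) * sdy u (Tmap α β γ δ b₁ b₂ q) := by
    funext q
    rw [hveq, sdx_compT α β γ δ b₁ b₂ u q (hud _)]
    ring
  have hSy : sdy v = fun q => (-β) * sdx u (Tmap α β γ δ b₁ b₂ q)
      + α * sdy u (Tmap α β γ δ b₁ b₂ q) := by
    funext q
    rw [hveq, sdy_compT α β γ δ b₁ b₂ u q (hud _)]
  have dA : DifferentiableAt ℝ (fun q => sdx u (Tmap α β γ δ b₁ b₂ q)) p :=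
    (huxd.comp (Tmap_diff α β γ δ b₁ b₂)) p
  have dB : DifferentiableAt ℝ (fun q => sdy u (Tmap α β γ δ b₁ b₂ q)) p :=
    (huyd.comp (Tmap_diff α β γ δ b₁ b₂)) p
  -- symmetry of second derivatives
  have hsymQ : sdx (sdy u) (Tmap α β γ δ b₁ b₂ p) = sdxy u (Tmap α β γ δ b₁ b₂ p) := sd_symm u hu (Tmap α β γ δ b₁ b₂ p)
  -- second derivatives of the composed maps
  have eAx : sdx (fun q => sdx u (Tmap α β γ δ b₁ b₂ q)) p
      = δ * sdxx u (Tmap α β γ δ b₁ b₂ p) - γ * sdxy u (Tmap α β γ δ b₁ b₂ p) :=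
    sdx_compT α β γ δ b₁ b₂ (sdx u) p (huxd _)
  have eAy : sdy (fun q => sdx u (Tmap α β γ δ b₁ b₂ q)) p
      = -β * sdxx u (Tmap α β γ δ b₁ b₂ p) + α * sdxy u (Tmap α β γ δ b₁ b₂ p) :=
    sdy_compT α β γ δ b₁ b₂ (sdx u) p (huxd _)
  have eBx : sdx (fun q => sdy u (Tmap α β γ δ b₁ b₂ q)) p
      = δ * sdxy u (Tmap α β γ δ b₁ b₂ p) - γ * sdyy u (Tmap α β γ δ b₁ b₂ p) := by
    rw [sdx_compT α β γ δ b₁ b₂ (sdy u) p (huyd _), hsymQ]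
    rfl
  have eBy : sdy (fun q => sdy u (Tmap α β γ δ b₁ b₂ q)) p
      = -β * sdxy u (Tmap α β γ δ b₁ b₂ p) + α * sdyy u (Tmap α β γ δ b₁ b₂ p) := by
    rw [sdy_compT α β γ δ b₁ b₂ (sdy u) p (huyd _), hsymQ]
    rfl
  have dvxx : sdxx v p = δ * (δ * sdxx u (Tmap α β γ δ b₁ b₂ p) - γ * sdxy u (Tmap α β γ δ b₁ b₂ p))
      + (-γ) * (δ * sdxy u (Tmap α β γ δ b₁ b₂ p) - γ * sdyy u (Tmap α β γ δ b₁ b₂ p)) := by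
    have h0 : sdxx v p = sdx (fun q => δ * sdx u (Tmap α β γ δ b₁ b₂ q)
        + (-γ) * sdy u (Tmap α β γ δ b₁ b₂ q)) p := by
      show sdx (sdx v) p = _
      rw [hSx]
    rw [h0, sdx_lin δ (-γ) _ _ p dA dB, eAx, eBx]
  have dvxy : sdxy v p = δ * (-β * sdxx u (Tmap α β γ δ b₁ b₂ p) + α * sdxy u (Tmap α β γ δ b₁ b₂ p))
      + (-γ) * (-β * sdxy u (Tmap α β γ δ b₁ b₂ p) + α * sdyy u (Tmap α β γ δ b₁ b₂ p)) := by
    have h0 : sdxy v p = sdy (fun q => δ * sdx u (Tmap α β γ δ b₁ b₂ q)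
        + (-γ) * sdy u (Tmap α β γ δ b₁ b₂ q)) p := by
      show sdy (sdx v) p = _
      rw [hSx]
    rw [h0, sdy_lin δ (-γ) _ _ p dA dB, eAy, eBy]
  have dvyy : sdyy v p = -β * (-β * sdxx u (Tmap α β γ δ b₁ b₂ p) + α * sdxy u (Tmap α β γ δ b₁ b₂ p))
      + α * (-β * sdxy u (Tmap α β γ δ b₁ b₂ p) + α * sdyy u (Tmap α β γ δ b₁ b₂ p)) := by
    have h0 : sdyy v p = sdy (fun q => (-β) * sdx u (Tmap α β γ δ b₁ b₂ q)
        + α * sdy u (Tmap α β γ δ b₁ b₂ q)) p := by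
      show sdy (sdy v) p = _
      rw [hSy]
    rw [h0, sdy_lin (-β) α _ _ p dA dB, eAy, eBy]
  -- conclude
  rw [dvt, hpde (Tmap α β γ δ b₁ b₂ p)]
  simp only [affineHeatRHS]
  rw [dvx, dvy, dvxx, dvxy, dvyy]
  congr 1
  have h1 : (α * δ - β * γ) ^ 2 = 1 := by rw [hdet]; norm_num
  linear_combination (-((sdx u (Tmap α β γ δ b₁ b₂ p)) ^ 2 * sdyy u (Tmap α β γ δ b₁ b₂ p) - 2 * sdx u (Tmap α β γ δ b₁ b₂ p) * sdy u (Tmap α β γ δ b₁ b₂ p) * sdxy u (Tmap α β γ δ b₁ b₂ p)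
    + (sdy u (Tmap α β γ δ b₁ b₂ p)) ^ 2 * sdxx u (Tmap α β γ δ b₁ b₂ p))) * h1
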